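/- Suppose each τ_i is non-decreasing, and there is a constant p > 0 with p_i(t) ≥ p for all t ≥ t_0 and each i = 1,…,m, such that p^m · limsup_{t→∞} ∏_{i=1}^m ( t − τ_i(t) ) > 1/m^m. Then every solution of the equation x'(t) + ∑_{i=1}^m p_i(t) x(τ_i(t)) = 0 is oscillatory. -/

import Mathlib

open Real Filter MeasureTheory

private lemma amgm_aux {m : ℕ} (hm : 1 ≤ m) (d : Fin m → ℝ) (hd : ∀ i, 0 ≤ d i) :
    ∏ i, d i ≤ ((∑ i, d i) / m) ^ m := by
  have hm0 : (m : ℝ) ≠ 0 := Nat.cast_ne_zero.2 (by omega)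
  have h := Real.geom_mean_le_arith_mean_weighted Finset.univ (fun _ => (m : ℝ)⁻¹) d
    (fun i _ => by positivity) (by simp [Finset.card_univ, mul_inv_cancel₀ hm0])
    (fun i _ => hd i)
  have h2 : (∏ i, d i ^ ((m : ℝ)⁻¹)) ^ m ≤ (∑ i, (m : ℝ)⁻¹ * d i) ^ m :=
    pow_le_pow_left₀ (Finset.prod_nonneg fun i _ => Real.rpow_nonneg (hd i) _) h m
  calc ∏ i, d i = (∏ i, d i ^ ((m : ℝ)⁻¹)) ^ m := by
        rw [← Finset.prod_pow]
        refine (Finset.prod_congr rfl fun i _ => ?_).symm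
        rw [← Real.rpow_natCast (d i ^ ((m : ℝ)⁻¹)) m, ← Real.rpow_mul (hd i),
          inv_mul_cancel₀ hm0, Real.rpow_one]
    _ ≤ (∑ i, (m : ℝ)⁻¹ * d i) ^ m := h2
    _ = ((∑ i, d i) / m) ^ m := by rw [← Finset.mul_sum]; ring_nf

private lemma key_bound
    (m : ℕ) (hm : 1 ≤ m) (t0 : ℝ)
    (p : Fin m → ℝ → ℝ) (τ : Fin m → ℝ → ℝ)
    (hp_cont : ∀ i, ContinuousOn (p i) (Set.Ici t0))
    (hp_nonneg : ∀ i t, t0 ≤ t → 0 ≤ p i t)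
    (hτ_cont : ∀ i, ContinuousOn (τ i) (Set.Ici t0))
    (hτ_le : ∀ i t, t0 ≤ t → τ i t ≤ t)
    (hτ_tendsto : ∀ i, Tendsto (τ i) atTop atTop)
    (hτ_mono : ∀ i, MonotoneOn (τ i) (Set.Ici t0))
    (p₀ : ℝ) (hp₀_pos : 0 < p₀)
    (hp₀_le : ∀ i t, t0 ≤ t → p₀ ≤ p i t)
    (z : ℝ → ℝ) (hz_cont : Continuous z)
    (T : ℝ) (hT : t0 ≤ T)
    (hz_sol : ∀ t, T ≤ t → HasDerivAt z (-(∑ i : Fin m, p i t * z (τ i t))) t)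
    (hz_pos : ∀ t, T ≤ t → 0 < z t) :
    ∀ᶠ t in atTop, ∏ i : Fin m, (t - τ i t) ≤ (1 / (p₀ * m)) ^ m := by
  -- the quantity staying ahead of all delays
  have hall : ∀ C : ℝ, ∃ B, C ≤ B ∧ ∀ t, B ≤ t → ∀ i, C ≤ τ i t := by
    intro C
    have h : ∀ᶠ t in atTop, ∀ i : Fin m, C ≤ τ i t :=
      eventually_all.2 fun i => (hτ_tendsto i).eventually_ge_atTop C
    obtain ⟨B, hB⟩ := eventually_atTop.1 h
    exact ⟨max C B, le_max_left _ _, fun t ht i => hB t ((le_max_right _ _).trans ht) i⟩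
  obtain ⟨B₁, hTB₁, hB₁⟩ := hall T
  obtain ⟨B₂, hB₁B₂, hB₂⟩ := hall B₁
  obtain ⟨B₃, hB₂B₃, hB₃⟩ := hall B₂
  have ht0B₁ : t0 ≤ B₁ := hT.trans hTB₁
  have ht0B₂ : t0 ≤ B₂ := ht0B₁.trans hB₁B₂
  -- continuity of the rhs
  have hg_cont : ContinuousOn (fun s => ∑ j : Fin m, p j s * z (τ j s)) (Set.Ici t0) :=
    continuousOn_finset_sum _ fun j _ =>
      (hp_cont j).mul (hz_cont.comp_continuousOn (hτ_cont j))
  -- z is antitone on [B₁, ∞)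
  have hanti : AntitoneOn z (Set.Ici B₁) := by
    have hdiff : ∀ s ∈ interior (Set.Ici B₁), HasDerivAt z
        (-(∑ i : Fin m, p i s * z (τ i s))) s := by
      intro s hs
      rw [interior_Ici] at hs
      exact hz_sol s (hTB₁.trans hs.le)
    refine antitoneOn_of_deriv_nonpos (convex_Ici B₁) hz_cont.continuousOn
      (fun s hs => (hdiff s hs).differentiableAt.differentiableWithinAt) ?_
    intro s hs
    rw [(hdiff s hs).deriv]
    rw [interior_Ici] at hs
    have hsB₁ : B₁ ≤ s := hs.le
    simp only [neg_nonpos]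
    exact Finset.sum_nonneg fun i _ => mul_nonneg (hp_nonneg i s (ht0B₁.trans hsB₁))
      (hz_pos _ (hB₁ s hsB₁ i)).le
  filter_upwards [eventually_ge_atTop B₃] with t ht
  have hB₂t : B₂ ≤ t := hB₂B₃.trans ht
  have hB₁t : B₁ ≤ t := hB₁B₂.trans hB₂t
  have hTt : T ≤ t := hTB₁.trans hB₁t
  have ht0t : t0 ≤ t := hT.trans hTt
  set S := ∑ j : Fin m, z (τ j t) with hS_def
  have hS_pos : 0 < S :=
    Finset.sum_pos (fun j _ => hz_pos _ (hB₁ t hB₁t j)) ⟨⟨0, by omega⟩, Finset.mem_univ _⟩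
  -- the key per-index estimate
  have key : ∀ i : Fin m, p₀ * (t - τ i t) * S ≤ z (τ i t) := by
    intro i
    set c := τ i t with hc_def
    have hB₂c : B₂ ≤ c := hB₃ t ht i
    have hB₁c : B₁ ≤ c := hB₁B₂.trans hB₂c
    have ht0c : t0 ≤ c := ht0B₁.trans hB₁c
    have hct : c ≤ t := hτ_le i t ht0t
    have hIcc : Set.Icc c t ⊆ Set.Ici t0 := fun s hs => ht0c.trans hs.1
    have hint : IntervalIntegrable (fun s => ∑ j : Fin m, p j s * z (τ j s)) volume c t := by
      apply ContinuousOn.intervalIntegrable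
      rw [Set.uIcc_of_le hct]
      exact hg_cont.mono hIcc
    have hftc : ∫ s in c..t, -(∑ j : Fin m, p j s * z (τ j s)) = z t - z c := by
      apply intervalIntegral.integral_eq_sub_of_hasDerivAt
      · intro s hs
        rw [Set.uIcc_of_le hct] at hs
        exact hz_sol s (hTB₁.trans (hB₁c.trans hs.1))
      · exact hint.neg
    have hftc' : ∫ s in c..t, (∑ j : Fin m, p j s * z (τ j s)) = z c - z t := by
      rw [intervalIntegral.integral_neg] at hftc
      linarith
    have hmono : ∫ s in c..t, (p₀ * S) ≤ ∫ s in c..t, (∑ j : Fin m, p j s * z (τ j s)) := by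
      apply intervalIntegral.integral_mono_on hct intervalIntegrable_const hint
      intro s hs
      have ht0s : t0 ≤ s := ht0c.trans hs.1
      have hst : s ≤ t := hs.2
      rw [hS_def, Finset.mul_sum]
      apply Finset.sum_le_sum
      intro j _
      have hτst : τ j s ≤ τ j t := hτ_mono j ht0s ht0t hst
      have hB₁τs : B₁ ≤ τ j s := hB₂ s (hB₂c.trans hs.1) j
      have hzz : z (τ j t) ≤ z (τ j s) := hanti hB₁τs (hB₁τs.trans hτst) hτst
      have hzt_nonneg : 0 ≤ z (τ j t) := (hz_pos _ (hB₁ t hB₁t j)).le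
      exact mul_le_mul (hp₀_le j s ht0s) hzz hzt_nonneg
        (hp₀_pos.le.trans (hp₀_le j s ht0s))
    rw [intervalIntegral.integral_const, smul_eq_mul] at hmono
    have hzt_pos : 0 < z t := hz_pos t hTt
    nlinarith [hftc']
  -- sum the estimates
  set D := ∑ i : Fin m, (t - τ i t) with hD_def
  have hd_nonneg : ∀ i : Fin m, 0 ≤ t - τ i t := fun i => sub_nonneg.2 (hτ_le i t ht0t)
  have hD_nonneg : 0 ≤ D := Finset.sum_nonneg fun i _ => hd_nonneg i
  have hsum : p₀ * D * S ≤ S := by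
    have := Finset.sum_le_sum (fun i (_ : i ∈ Finset.univ) => key i)
    calc p₀ * D * S = ∑ i : Fin m, p₀ * (t - τ i t) * S := by
          rw [hD_def, eq_comm, ← Finset.sum_mul, ← Finset.mul_sum]
      _ ≤ ∑ i : Fin m, z (τ i t) := this
      _ = S := rfl
  have hpD : p₀ * D ≤ 1 := by
    have := le_of_mul_le_mul_right (by linarith : (p₀ * D) * S ≤ 1 * S) hS_pos
    linarith
  -- AM-GM
  have hm_pos : (0:ℝ) < m := by exact_mod_cast hm
  calc ∏ i : Fin m, (t - τ i t) ≤ (D / m) ^ m := amgm_aux hm _ hd_nonneg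
    _ ≤ (1 / (p₀ * m)) ^ m := by
        apply pow_le_pow_left₀ (div_nonneg hD_nonneg hm_pos.le)
        rw [div_le_div_iff₀ hm_pos (by positivity)]
        nlinarith

/-- **Corollary 3.5.** Suppose each `τ i` is non-decreasing, `p i t ≥ p₀ > 0` for a
constant `p₀`, and `p₀ ^ m * limsup_{t→∞} ∏_i (t − τ i t) > 1/mᵐ`.
Then every solution of `x'(t) + ∑ i, p i t * x (τ i t) = 0` is oscillatory. -/
theorem oscillation_several_args_constant_minorant
    (m : ℕ) (hm : 1 ≤ m) (t0 : ℝ)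
    (p : Fin m → ℝ → ℝ) (τ : Fin m → ℝ → ℝ)
    (hp_cont : ∀ i, ContinuousOn (p i) (Set.Ici t0))
    (hp_nonneg : ∀ i t, t0 ≤ t → 0 ≤ p i t)
    (hτ_cont : ∀ i, ContinuousOn (τ i) (Set.Ici t0))
    (hτ_nonneg : ∀ i t, t0 ≤ t → 0 ≤ τ i t)
    (hτ_le : ∀ i t, t0 ≤ t → τ i t ≤ t)
    (hτ_tendsto : ∀ i, Tendsto (τ i) atTop atTop)
    (hτ_mono : ∀ i, MonotoneOn (τ i) (Set.Ici t0))
    (p₀ : ℝ) (hp₀_pos : 0 < p₀)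
    (hp₀_le : ∀ i t, t0 ≤ t → p₀ ≤ p i t)
    (hlimsup :
      p₀ ^ m * Filter.limsup (fun t : ℝ =>
        ∏ i : Fin m, (t - τ i t)) atTop > 1 / (m : ℝ) ^ m)
    (x : ℝ → ℝ) (hx_cont : Continuous x)
    (hx_sol : ∃ T, t0 ≤ T ∧ ∀ t, T ≤ t →
      HasDerivAt x (-(∑ i : Fin m, p i t * x (τ i t))) t) :
    ∀ T : ℝ, ∃ t, T ≤ t ∧ x t = 0 := by
  by_contra hcon
  push_neg at hcon
  obtain ⟨T₁, hT₁⟩ := hcon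
  obtain ⟨T₂, hT₂0, hT₂sol⟩ := hx_sol
  set T := max t0 (max T₁ T₂) with hT_def
  have ht0T : t0 ≤ T := le_max_left _ _
  have hT₁T : T₁ ≤ T := (le_max_left _ _).trans (le_max_right _ _)
  have hT₂T : T₂ ≤ T := (le_max_right _ _).trans (le_max_right _ _)
  have hne : ∀ t, T ≤ t → x t ≠ 0 := fun t ht => hT₁ t (hT₁T.trans ht)
  have hsol : ∀ t, T ≤ t → HasDerivAt x (-(∑ i : Fin m, p i t * x (τ i t))) t :=
    fun t ht => hT₂sol t (hT₂T.trans ht)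
  -- constant sign on [T, ∞)
  have hsign : (∀ t, T ≤ t → 0 < x t) ∨ (∀ t, T ≤ t → 0 < -x t) := by
    rcases (hne T le_rfl).lt_or_gt with h | h
    · right
      intro t ht
      rcases (hne t ht).lt_or_gt with h2 | h2
      · linarith
      · exfalso
        have h0 : (0:ℝ) ∈ Set.Icc (x T) (x t) := ⟨h.le, h2.le⟩
        obtain ⟨c, hc, hc0⟩ := intermediate_value_Icc ht hx_cont.continuousOn h0
        exact hne c hc.1 hc0
    · left
      intro t ht
      rcases (hne t ht).lt_or_gt with h2 | h2
      · exfalso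
        have h0 : (0:ℝ) ∈ Set.Icc (x t) (x T) := ⟨h2.le, h.le⟩
        obtain ⟨c, hc, hc0⟩ := intermediate_value_Icc' ht hx_cont.continuousOn h0
        exact hne c hc.1 hc0
      · exact h2
  -- eventual bound on the product, via `key_bound`
  have hev : ∀ᶠ t in atTop, ∏ i : Fin m, (t - τ i t) ≤ (1 / (p₀ * m)) ^ m := by
    rcases hsign with hpos | hneg
    · exact key_bound m hm t0 p τ hp_cont hp_nonneg hτ_cont hτ_le hτ_tendsto hτ_mono
        p₀ hp₀_pos hp₀_le x hx_cont T ht0T hsol hpos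
    · refine key_bound m hm t0 p τ hp_cont hp_nonneg hτ_cont hτ_le hτ_tendsto hτ_mono
        p₀ hp₀_pos hp₀_le (fun s => -x s) hx_cont.neg T ht0T ?_ hneg
      intro t ht
      have h := (hsol t ht).neg
      refine h.congr_deriv ?_
      simp [mul_neg, Finset.sum_neg_distrib]
  -- limsup bound
  have hcb : IsCoboundedUnder (· ≤ ·) atTop (fun t : ℝ => ∏ i : Fin m, (t - τ i t)) := by
    apply isCoboundedUnder_le_of_eventually_le atTop (x := 0)
    filter_upwards [eventually_ge_atTop t0] with t ht
    exact Finset.prod_nonneg fun i _ => sub_nonneg.2 (hτ_le i t ht)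
  have hls : limsup (fun t : ℝ => ∏ i : Fin m, (t - τ i t)) atTop ≤ (1 / (p₀ * m)) ^ m :=
    limsup_le_of_le hcb hev
  have hmul : p₀ ^ m * limsup (fun t : ℝ => ∏ i : Fin m, (t - τ i t)) atTop
      ≤ p₀ ^ m * (1 / (p₀ * m)) ^ m :=
    mul_le_mul_of_nonneg_left hls (by positivity)
  have hm0 : (m : ℝ) ≠ 0 := Nat.cast_ne_zero.2 (by omega)
  have heq : p₀ ^ m * (1 / (p₀ * m)) ^ m = 1 / (m : ℝ) ^ m := by
    rw [← mul_pow]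
    have hb : p₀ * (1 / (p₀ * m)) = 1 / (m : ℝ) := by
      field_simp
    rw [hb, div_pow, one_pow]
  rw [heq] at hmul
  linarith
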